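/- arXiv:1410.5593 — 5 statements merged into one kernel-verified Lean document; each statement's English description precedes it below -/
import Mathlib

section
/- In the standard MV-algebra [0,1] (with x ⊕ y = min(1,x+y) and x* = 1-x), the identity (x₁·z₁ ⊖ y₁·z₂) ⊓ (x₂·z₂ ⊖ y₂·z₁) ⊓ (y₁·y₂ ⊖ x₁·x₂) = 0 holds for all x₁, x₂, y₁, y₂, z₁, z₂ ∈ [0,1], where a ⊖ b = max(0, a−b), · is real multiplication, and ⊓ is minimum. -/
/-! Suppose the first two truncated differences are positive, i.e. `y₁ z₂ < x₁ z₁` and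
`y₂ z₁ < x₂ z₂`. Multiplying these inequalities between nonnegative quantities gives
`y₁ y₂ · z₁ z₂ < x₁ x₂ · z₁ z₂`, and cancelling `z₁ z₂ ≥ 0` leaves `y₁ y₂ < x₁ x₂`, so the third
truncated difference vanishes. -/

lemma min_min_max_zero_eq_zero {α : Type*} [LinearOrder α] [Zero α] {a b c : α}
    (h : a ≤ 0 ∨ b ≤ 0 ∨ c ≤ 0) :
    min (min (max 0 a) (max 0 b)) (max 0 c) = 0 := by
  rcases h with h | h | h <;> simp [h]

lemma mul_lt_mul_of_cross_lt {R : Type*} [CommRing R] [LinearOrder R] [IsStrictOrderedRing R]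
    {x₁ x₂ y₁ y₂ z₁ z₂ : R} (hy₁ : 0 ≤ y₁) (hy₂ : 0 ≤ y₂) (hz₁ : 0 ≤ z₁) (hz₂ : 0 ≤ z₂)
    (h₁ : y₁ * z₂ < x₁ * z₁) (h₂ : y₂ * z₁ < x₂ * z₂) :
    y₁ * y₂ < x₁ * x₂ := by
  have hprod : y₁ * y₂ * (z₁ * z₂) < x₁ * x₂ * (z₁ * z₂) := by
    calc y₁ * y₂ * (z₁ * z₂) = y₁ * z₂ * (y₂ * z₁) := by ring
      _ < x₁ * z₁ * (x₂ * z₂) := mul_lt_mul'' h₁ h₂ (by positivity) (by positivity)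
      _ = x₁ * x₂ * (z₁ * z₂) := by ring
  exact lt_of_mul_lt_mul_right hprod (mul_nonneg hz₁ hz₂)

theorem stmt_2_general (x₁ x₂ y₁ y₂ z₁ z₂ : ℝ)
    (hy₁ : y₁ ∈ Set.Icc (0:ℝ) 1) (hy₂ : y₂ ∈ Set.Icc (0:ℝ) 1)
    (hz₁ : z₁ ∈ Set.Icc (0:ℝ) 1) (hz₂ : z₂ ∈ Set.Icc (0:ℝ) 1) :
    min (min (max 0 (x₁ * z₁ - y₁ * z₂)) (max 0 (x₂ * z₂ - y₂ * z₁)))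
      (max 0 (y₁ * y₂ - x₁ * x₂)) = 0 := by
  apply min_min_max_zero_eq_zero
  simp only [sub_nonpos]
  by_contra! h
  obtain ⟨h₁, h₂, h₃⟩ := h
  exact h₃.not_gt (mul_lt_mul_of_cross_lt hy₁.1 hy₂.1 hz₁.1 hz₂.1 h₁ h₂)

/-- In the standard MV-algebra `[0,1]`,
`(x₁·z₁ ⊖ y₁·z₂) ⊓ (x₂·z₂ ⊖ y₂·z₁) ⊓ (y₁·y₂ ⊖ x₁·x₂) = 0`,
where `a ⊖ b = max 0 (a - b)`. -/
theorem stmt_2 (x₁ x₂ y₁ y₂ z₁ z₂ : ℝ)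
    (hx₁ : x₁ ∈ Set.Icc (0:ℝ) 1) (hx₂ : x₂ ∈ Set.Icc (0:ℝ) 1)
    (hy₁ : y₁ ∈ Set.Icc (0:ℝ) 1) (hy₂ : y₂ ∈ Set.Icc (0:ℝ) 1)
    (hz₁ : z₁ ∈ Set.Icc (0:ℝ) 1) (hz₂ : z₂ ∈ Set.Icc (0:ℝ) 1) :
    min (min (max 0 (x₁ * z₁ - y₁ * z₂)) (max 0 (x₂ * z₂ - y₂ * z₁)))
      (max 0 (y₁ * y₂ - x₁ * x₂)) = 0 :=
  stmt_2_general x₁ x₂ y₁ y₂ z₁ z₂ hy₁ hy₂ hz₁ hz₂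
end

section
/- Let G be an Archimedean lattice-ordered commutative group. If G is additionally equipped with a multiplication making it an f-ring (i.e., x ⊓ y = 0 implies (x·z) ⊓ y = 0 and (z·x) ⊓ y = 0 for z ≥ 0), then the multiplication is commutative. -/
/-!
In an f-ring, multiplication by `z ≥ 0` preserves disjointness, so `X ↦ X * z + z * X` preserves
meets. Shifting `u` by the central element `i • 1` does not change `u * v - v * u`, which is
therefore at most `|u - i • 1| * |v| + |v| * |u - i • 1|` for every `i`. If `0 ≤ u ≤ M • 1`, the
meet of `|u - i • 1|` over `i ≤ M` is at most `1`, whence `u * v - v * u ≤ 2 |v|`; applied to all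
multiples `N • u`, the Archimedean property makes `u` central. A general `a ≥ 0` differs from the
central `a ⊓ n • 1` by `(a - n • 1)⁺`, and `n • (a - n • 1)⁺ ≤ a * a`, so
`n • (a * b - b * a) ≤ a * a * |b| + |b| * (a * a)` for all `n` and `a` is central as well.
Finally `x = x⁺ - x⁻`.
-/

class IsFRing (R : Type*) [Ring R] [Lattice R] : Prop where
  mul_right_inf_eq_zero {x y z : R} : x ⊓ y = 0 → 0 ≤ z → x * z ⊓ y = 0
  mul_left_inf_eq_zero {x y z : R} : x ⊓ y = 0 → 0 ≤ z → z * x ⊓ y = 0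

section LatticeOrderedGroup

variable {α : Type*} [AddCommGroup α] [Lattice α] [AddLeftMono α] {a b c : α}

theorem inf_add_le_inf_add_inf (ha : 0 ≤ a) (hb : 0 ≤ b) (hc : 0 ≤ c) :
    c ⊓ (a + b) ≤ c ⊓ a + c ⊓ b := by
  have h₁ : c ⊓ (a + b) ≤ a + c ⊓ b :=
    calc c ⊓ (a + b) ≤ (a + c) ⊓ (a + b) := inf_le_inf_right _ (le_add_of_nonneg_left ha)
      _ = a + c ⊓ b := (add_inf c b a).symm
  have h₂ : c ⊓ (a + b) - c ⊓ b ≤ c := (sub_le_self _ (le_inf hc hb)).trans inf_le_left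
  have h₃ : c ⊓ (a + b) - c ⊓ b ≤ a := sub_le_iff_le_add.2 h₁
  exact sub_le_iff_le_add.1 (le_inf h₂ h₃)

theorem add_inf_eq_zero (ha : 0 ≤ a) (hb : 0 ≤ b) (hac : a ⊓ c = 0) (hbc : b ⊓ c = 0) :
    (a + b) ⊓ c = 0 := by
  have hc : 0 ≤ c := hac ▸ inf_le_right
  refine le_antisymm ?_ (le_inf (add_nonneg ha hb) hc)
  calc (a + b) ⊓ c = c ⊓ (a + b) := inf_comm _ _
    _ ≤ c ⊓ a + c ⊓ b := inf_add_le_inf_add_inf ha hb hc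
    _ = 0 := by rw [inf_comm, hac, inf_comm, hbc, add_zero]

theorem le_of_le_add_of_inf_eq_zero (ha : 0 ≤ a) (hb : 0 ≤ b) (hc : 0 ≤ c) (h : c ≤ a + b)
    (hca : c ⊓ a = 0) : c ≤ b :=
  calc c = c ⊓ (a + b) := (inf_of_le_left h).symm
    _ ≤ c ⊓ a + c ⊓ b := inf_add_le_inf_add_inf ha hb hc
    _ ≤ b := by rw [hca, zero_add]; exact inf_le_right

theorem posPart_abs_sub_le {e : α} (he : 0 ≤ e) (m : α) : (|m| - e)⁺ ≤ m⁻ + (m - e)⁺ := by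
  have hm : m⁺ - e ≤ (m - e)⁺ := by
    rw [posPart_def m, sup_sub, zero_sub]
    exact sup_le (le_posPart _) ((neg_nonpos.2 he).trans (posPart_nonneg _))
  refine sup_le ?_ (add_nonneg (negPart_nonneg m) (posPart_nonneg _))
  calc |m| - e = m⁻ + (m⁺ - e) := by rw [← posPart_add_negPart]; abel
    _ ≤ m⁻ + (m - e)⁺ := by gcongr

theorem inf'_abs_sub_nsmul_le {e u : α} (he : 0 ≤ e) (hu : 0 ≤ u) {M : ℕ} (huM : u ≤ M • e) :
    (Finset.range (M + 1)).inf' Finset.nonempty_range_add_one (fun i => |u - i • e|) ≤ e := by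
  set A := (Finset.range (M + 1)).inf' Finset.nonempty_range_add_one (fun i => |u - i • e|)
  have hA : 0 ≤ (A - e)⁺ := posPart_nonneg _
  have step : ∀ i ≤ M, (A - e)⁺ ≤ (u - i • e)⁻ + (u - (i + 1) • e)⁺ := fun i hi =>
    calc (A - e)⁺ ≤ (|u - i • e| - e)⁺ :=
          posPart_mono (sub_le_sub_right (Finset.inf'_le _ (Finset.mem_range_succ_iff.2 hi)) e)
      _ ≤ (u - i • e)⁻ + (u - i • e - e)⁺ := posPart_abs_sub_le he _
      _ = (u - i • e)⁻ + (u - (i + 1) • e)⁺ := by rw [succ_nsmul, sub_add_eq_sub_sub]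
  -- `(A - e)⁺` is disjoint from every `(u - i • e)⁻`, so it climbs the grid up to `(M + 1) • e`.
  have climb : ∀ i ≤ M, (A - e)⁺ ⊓ (u - i • e)⁻ = 0 → (A - e)⁺ ≤ (u - (i + 1) • e)⁺ :=
    fun i hi => le_of_le_add_of_inf_eq_zero (negPart_nonneg _) (posPart_nonneg _) hA (step i hi)
  have disjoint : ∀ i ≤ M, (A - e)⁺ ⊓ (u - i • e)⁻ = 0 := by
    intro i hi
    induction i with
    | zero => rw [zero_smul, sub_zero, negPart_eq_zero.2 hu, inf_of_le_right hA]
    | succ i ih =>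
      refine le_antisymm ?_ (le_inf hA (negPart_nonneg _))
      calc (A - e)⁺ ⊓ (u - (i + 1) • e)⁻ ≤ (u - (i + 1) • e)⁺ ⊓ (u - (i + 1) • e)⁻ :=
            inf_le_inf_right _ (climb i (by omega) (ih (by omega)))
        _ = 0 := posPart_inf_negPart_eq_zero _
  have hM : (u - (M + 1) • e)⁺ = 0 :=
    posPart_eq_zero.2 (sub_nonpos.2 (huM.trans (nsmul_le_nsmul_left he M.le_succ)))
  exact sub_nonpos.1 (posPart_nonpos.1 ((climb M le_rfl (disjoint M le_rfl)).trans_eq hM))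

end LatticeOrderedGroup

section LatticeOrderedRing

variable {R : Type*} [Ring R] [Lattice R] [IsOrderedRing R]

theorem mul_le_abs_mul_abs (p q : R) : p * q ≤ |p| * |q| :=
  calc p * q = (p⁺ - p⁻) * (q⁺ - q⁻) := by rw [posPart_sub_negPart, posPart_sub_negPart]
    _ ≤ (p⁺ - p⁻) * (q⁺ - q⁻) + 2 • (p⁺ * q⁻ + p⁻ * q⁺) :=
      le_add_of_nonneg_right (nsmul_nonneg (add_nonneg
        (mul_nonneg (posPart_nonneg p) (negPart_nonneg q))
        (mul_nonneg (negPart_nonneg p) (posPart_nonneg q))) 2)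
    _ = (p⁺ + p⁻) * (q⁺ + q⁻) := by noncomm_ring
    _ = |p| * |q| := by rw [posPart_add_negPart, posPart_add_negPart]

theorem mul_sub_mul_le (p q : R) : p * q - q * p ≤ |p| * |q| + |q| * |p| := by
  simpa only [neg_mul, abs_neg, ← sub_eq_add_neg] using
    add_le_add (mul_le_abs_mul_abs p q) (mul_le_abs_mul_abs (-q) p)

theorem commute_of_forall_mul_sub_mul_nonpos {a : R} (h : ∀ b, a * b - b * a ≤ 0) (b : R) :
    Commute a b :=
  le_antisymm (sub_nonpos.1 (h b)) (by simpa using h (-b))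

end LatticeOrderedRing

namespace IsFRing

variable {R : Type*} [Ring R] [Lattice R]

theorem mul_eq_zero_of_inf_eq_zero [IsFRing R] {x y : R} (h : x ⊓ y = 0) : x * y = 0 := by
  have hy : 0 ≤ y := h ▸ inf_le_right
  have hx : 0 ≤ x := h ▸ inf_le_left
  have hxy : y ⊓ x * y = 0 := by rw [inf_comm]; exact mul_right_inf_eq_zero h hy
  simpa using mul_left_inf_eq_zero hxy hx

section

variable [AddLeftMono R] [IsFRing R]

theorem posPart_mul_negPart (x : R) : x⁺ * x⁻ = 0 :=
  mul_eq_zero_of_inf_eq_zero (posPart_inf_negPart_eq_zero x)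

theorem negPart_mul_posPart (x : R) : x⁻ * x⁺ = 0 :=
  mul_eq_zero_of_inf_eq_zero (by rw [inf_comm, posPart_inf_negPart_eq_zero])

theorem zero_le_one_of_mul_nonneg (hmul : ∀ a b : R, 0 ≤ a → 0 ≤ b → 0 ≤ a * b) : (0 : R) ≤ 1 :=
  calc (0 : R) ≤ 1⁺ * 1⁺ + 1⁻ * 1⁻ :=
        add_nonneg (hmul _ _ (posPart_nonneg 1) (posPart_nonneg 1))
          (hmul _ _ (negPart_nonneg 1) (negPart_nonneg 1))
    _ = 1⁺ * 1⁺ + 1⁻ * 1⁻ - (1⁺ * 1⁻ + 1⁻ * 1⁺) := by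
        rw [posPart_mul_negPart, negPart_mul_posPart, add_zero, sub_zero]
    _ = (1⁺ - 1⁻) * (1⁺ - 1⁻) := by noncomm_ring
    _ = 1 := by rw [posPart_sub_negPart, mul_one]

end

variable [IsOrderedRing R] [IsFRing R]

theorem mul_add_mul_inf_eq_zero {x y z : R} (h : x ⊓ y = 0) (hz : 0 ≤ z) :
    (x * z + z * x) ⊓ (y * z + z * y) = 0 := by
  have hx : 0 ≤ x := h ▸ inf_le_left
  have hy : 0 ≤ y := h ▸ inf_le_right
  have hy' : y ⊓ (x * z + z * x) = 0 := by
    rw [inf_comm]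
    exact add_inf_eq_zero (mul_nonneg hx hz) (mul_nonneg hz hx)
      (mul_right_inf_eq_zero h hz) (mul_left_inf_eq_zero h hz)
  rw [inf_comm]
  exact add_inf_eq_zero (mul_nonneg hy hz) (mul_nonneg hz hy)
    (mul_right_inf_eq_zero hy' hz) (mul_left_inf_eq_zero hy' hz)

theorem inf_mul_add_mul_inf {x y z : R} (hz : 0 ≤ z) :
    (x ⊓ y) * z + z * (x ⊓ y) = (x * z + z * x) ⊓ (y * z + z * y) := by
  set w := x ⊓ y
  have hrs : (x - w) ⊓ (y - w) = 0 := by rw [← inf_sub, sub_self]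
  calc w * z + z * w
        = w * z + z * w + ((x - w) * z + z * (x - w)) ⊓ ((y - w) * z + z * (y - w)) := by
        rw [mul_add_mul_inf_eq_zero hrs hz, add_zero]
    _ = (x * z + z * x) ⊓ (y * z + z * y) := by rw [add_inf]; noncomm_ring

theorem le_inf'_mul_add_mul {ι : Type*} {s : Finset ι} (hs : s.Nonempty) (f : ι → R) {z d : R}
    (hz : 0 ≤ z) (h : ∀ i ∈ s, d ≤ f i * z + z * f i) :
    d ≤ s.inf' hs f * z + z * s.inf' hs f :=
  Finset.inf'_induction hs f (p := fun x => d ≤ x * z + z * x)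
    (fun _ hx _ hy => (inf_mul_add_mul_inf hz).symm ▸ le_inf hx hy) h

theorem posPart_sub_mul_le {a c : R} (ha : 0 ≤ a) (hc : 0 ≤ c) : (a - c)⁺ * c ≤ a * a := by
  set t := (a - c)⁺
  have ht : t ≤ a := sup_le (sub_le_self a hc) ha
  have htt : t * (a - c) = t * t := by
    conv_lhs => rw [← posPart_sub_negPart (a - c)]
    rw [mul_sub, posPart_mul_negPart, sub_zero]
  calc t * c = t * a - t * t := by rw [← htt, mul_sub, sub_sub_cancel]
    _ ≤ t * a := sub_le_self _ (mul_nonneg (posPart_nonneg _) (posPart_nonneg _))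
    _ ≤ a * a := mul_le_mul_of_nonneg_right ht ha

theorem mul_sub_mul_le_of_le_nsmul_one {u : R} (hu : 0 ≤ u) {M : ℕ} (huM : u ≤ M • (1 : R))
    (v : R) : u * v - v * u ≤ |v| + |v| := by
  set A := (Finset.range (M + 1)).inf' Finset.nonempty_range_add_one (fun i => |u - i • (1 : R)|)
  have hshift : ∀ i : ℕ, u * v - v * u ≤ |u - i • (1 : R)| * |v| + |v| * |u - i • (1 : R)| := by
    intro i
    calc u * v - v * u = (u - i • (1 : R)) * v - v * (u - i • (1 : R)) := by
          rw [sub_mul, mul_sub, ((Commute.one_left v).smul_left i).eq]; abel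
      _ ≤ _ := mul_sub_mul_le _ _
  have hA : A ≤ 1 := inf'_abs_sub_nsmul_le zero_le_one hu huM
  calc u * v - v * u ≤ A * |v| + |v| * A :=
        le_inf'_mul_add_mul _ _ (abs_nonneg v) fun i _ => hshift i
    _ ≤ 1 * |v| + |v| * 1 := by gcongr
    _ = |v| + |v| := by rw [one_mul, mul_one]

theorem commute_of_le_nsmul_one (harch : ∀ a b : R, (∀ n : ℕ, n • a ≤ b) → a ≤ 0) {u : R}
    (hu : 0 ≤ u) {M : ℕ} (huM : u ≤ M • (1 : R)) (v : R) : Commute u v := by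
  refine commute_of_forall_mul_sub_mul_nonpos (fun w => harch _ (|w| + |w|) fun N => ?_) v
  have hNu : N • u ≤ (M * N) • (1 : R) := by rw [mul_nsmul]; exact nsmul_le_nsmul_right huM N
  simpa only [smul_mul_assoc, mul_smul_comm, smul_sub] using
    mul_sub_mul_le_of_le_nsmul_one (nsmul_nonneg hu N) hNu w

theorem commute_of_nonneg (harch : ∀ a b : R, (∀ n : ℕ, n • a ≤ b) → a ≤ 0) {a : R}
    (ha : 0 ≤ a) (b : R) : Commute a b := by
  refine commute_of_forall_mul_sub_mul_nonpos
    (fun b => harch _ (a * a * |b| + |b| * (a * a)) fun n => ?_) b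
  have hn : (0 : R) ≤ n • 1 := nsmul_nonneg zero_le_one n
  set t := (a - n • (1 : R))⁺
  have hnt : 0 ≤ n • t := nsmul_nonneg (posPart_nonneg _) n
  have hnta : n • t ≤ a * a := by simpa only [mul_smul_comm, mul_one] using posPart_sub_mul_le ha hn
  have htail : a * b - b * a = t * b - b * t := by
    have hcentral := (commute_of_le_nsmul_one harch (le_inf ha hn) inf_le_right b).eq
    rw [inf_eq_sub_posPart_sub, sub_mul, mul_sub] at hcentral
    exact sub_eq_sub_iff_sub_eq_sub.1 hcentral
  calc n • (a * b - b * a) = n • t * b - b * (n • t) := by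
        rw [htail, smul_sub, smul_mul_assoc, mul_smul_comm]
    _ ≤ |n • t| * |b| + |b| * |n • t| := mul_sub_mul_le _ _
    _ ≤ a * a * |b| + |b| * (a * a) := by rw [abs_of_nonneg hnt]; gcongr

end IsFRing

/-- An Archimedean lattice-ordered (additively commutative) group equipped with a
multiplication making it an f-ring has commutative multiplication. -/
theorem stmt_3 {R : Type*} [Ring R] [Lattice R]
    [CovariantClass R R (· + ·) (· ≤ ·)]
    (hmul : ∀ a b : R, 0 ≤ a → 0 ≤ b → 0 ≤ a * b)
    (harch : ∀ a b : R, (∀ n : ℕ, n • a ≤ b) → a ≤ 0)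
    (hf : ∀ x y z : R, 0 ≤ z → x ⊓ y = 0 → (x * z) ⊓ y = 0 ∧ (z * x) ⊓ y = 0) :
    ∀ x y : R, x * y = y * x := by
  have : IsFRing R := ⟨fun h hz => (hf _ _ _ hz h).1, fun h hz => (hf _ _ _ hz h).2⟩
  have : IsOrderedAddMonoid R := { add_le_add_left := fun _ _ h c => add_le_add_left h c }
  have : ZeroLEOneClass R := ⟨IsFRing.zero_le_one_of_mul_nonneg hmul⟩
  have : IsOrderedRing R := .of_mul_nonneg hmul
  intro x y
  have hcomm := (IsFRing.commute_of_nonneg harch (posPart_nonneg x) y).sub_left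
    (IsFRing.commute_of_nonneg harch (negPart_nonneg x) y)
  rwa [posPart_sub_negPart] at hcomm
end

section
/- In a semiprime commutative f-ring R, for all x, y ≥ 0, x² = y² implies x = y. -/
/-- In a semiprime commutative f-ring, for nonnegative `x`, `y`,
`x² = y²` implies `x = y`. -/
theorem stmt_7 {R : Type*} [CommRing R] [Lattice R]
    [CovariantClass R R (· + ·) (· ≤ ·)]
    (hmul : ∀ a b : R, 0 ≤ a → 0 ≤ b → 0 ≤ a * b)
    (hf : ∀ x y z : R, 0 ≤ z → x ⊓ y = 0 → (x * z) ⊓ y = 0)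
    (hsp : ∀ x : R, x * x = 0 → x = 0) :
    ∀ x y : R, 0 ≤ x → 0 ≤ y → x ^ 2 = y ^ 2 → x = y := by
  intro x y hx hy h
  set m := x ⊓ y with hm
  have hm0 : 0 ≤ m := le_inf hx hy
  have ha0 : 0 ≤ x - m := sub_nonneg.2 inf_le_left
  have hb0 : 0 ≤ y - m := sub_nonneg.2 inf_le_right
  have hab : (x - m) ⊓ (y - m) = 0 := by
    rw [← inf_sub, hm, sub_self]
  -- a * b = 0
  have h1 := hf (x - m) (y - m) (y - m) hb0 hab
  rw [inf_comm] at h1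
  have h2 := hf (y - m) ((x - m) * (y - m)) (x - m) ha0 h1
  rw [mul_comm (y - m), inf_idem] at h2
  -- key equations
  have key1 : (x - m) ^ 3 + 2 * ((x - m) ^ 2 * m) = 0 := by
    linear_combination (x - m) * h + (y + m) * h2
  have key2 : (y - m) ^ 3 + 2 * ((y - m) ^ 2 * m) = 0 := by
    linear_combination (m - y) * h + (x + m) * h2
  have cube_zero : ∀ a : R, 0 ≤ a → a ^ 3 + 2 * (a ^ 2 * m) = 0 → a = 0 := by
    intro a ha key
    have h3 : 0 ≤ a ^ 3 := by
      have := hmul a (a * a) ha (hmul a a ha ha)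
      calc (0:R) ≤ a * (a * a) := this
        _ = a ^ 3 := by ring
    have h4 : 0 ≤ 2 * (a ^ 2 * m) := by
      have := hmul a (a * m) ha (hmul a m ha hm0)
      have h5 : (0:R) + 0 ≤ a * (a * m) + a * (a * m) := add_le_add this this
      calc (0:R) = 0 + 0 := by ring
        _ ≤ a * (a * m) + a * (a * m) := h5
        _ = 2 * (a ^ 2 * m) := by ring
    have ha3 : a ^ 3 = 0 := by
      refine le_antisymm ?_ h3
      have : a ^ 3 = -(2 * (a ^ 2 * m)) := eq_neg_of_add_eq_zero_left key
      rw [this]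
      exact neg_nonpos.2 h4
    have ha2 : a * a = 0 := by
      apply hsp
      linear_combination a * ha3
    exact hsp a ha2
  have hxm : x - m = 0 := cube_zero _ ha0 key1
  have hym : y - m = 0 := cube_zero _ hb0 key2
  have := sub_eq_zero.1 hxm
  rw [this, sub_eq_zero.1 hym]
end

section
/- Let R be a commutative f-ring and I an ideal of R that is also an ℓ-ideal (i.e., an order-convex sublattice subgroup closed under multiplication by arbitrary elements). Then the nil-radical √I = {x ∈ R : xⁿ ∈ I for some n ≥ 1} is again an ℓ-ideal. -/
/-! Since `I` is an ideal, `√I` is the ideal radical, so only order-convexity needs an argument.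
In an f-ring `x⁺ ⊓ x⁻ = 0` forces `x⁺ * x⁻ = 0`, hence `|x|² = x²`. So `|x| ≤ |y|` gives
`0 ≤ x²ⁿ = |x|²ⁿ ≤ |y|²ⁿ = y²ⁿ`, and `y²ⁿ ∈ I` as soon as `yⁿ ∈ I`. -/

theorem Ideal.mem_radical_iff_exists_one_le_pow {R : Type*} [CommSemiring R] {J : Ideal R}
    {x : R} : x ∈ J.radical ↔ ∃ n, 1 ≤ n ∧ x ^ n ∈ J :=
  ⟨fun ⟨n, h⟩ => ⟨n + 1, Nat.le_add_left 1 n, J.pow_mem_of_pow_mem h n.le_succ⟩,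
    fun ⟨n, _, h⟩ => ⟨n, h⟩⟩

section FRing

variable {R : Type*} [CommRing R] [Lattice R] [AddLeftMono R]

theorem posPart_mul_negPart_eq_zero (hf : ∀ x y z : R, 0 ≤ z → x ⊓ y = 0 → (x * z) ⊓ y = 0)
    (x : R) : x⁺ * x⁻ = 0 := by
  have h₁ : (x⁺ * x⁻) ⊓ x⁻ = 0 := hf _ _ _ (negPart_nonneg x) (posPart_inf_negPart_eq_zero x)
  have h₂ : (x⁻ * x⁺) ⊓ (x⁺ * x⁻) = 0 := hf _ _ _ (posPart_nonneg x) (by rwa [inf_comm])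
  rwa [mul_comm, inf_idem] at h₂

theorem sq_abs_eq_sq (hf : ∀ x y z : R, 0 ≤ z → x ⊓ y = 0 → (x * z) ⊓ y = 0) (x : R) :
    |x| ^ 2 = x ^ 2 := by
  rw [← posPart_add_negPart]
  conv_rhs => rw [← posPart_sub_negPart x]
  linear_combination 4 * posPart_mul_negPart_eq_zero hf x

theorem zeroLEOneClass_of_mul_nonneg (hmul : ∀ a b : R, 0 ≤ a → 0 ≤ b → 0 ≤ a * b)
    (hf : ∀ x y z : R, 0 ≤ z → x ⊓ y = 0 → (x * z) ⊓ y = 0) : ZeroLEOneClass R where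
  zero_le_one := by
    have h := hmul _ _ (abs_nonneg (1 : R)) (abs_nonneg 1)
    rwa [← sq, sq_abs_eq_sq hf, one_pow] at h

end FRing

theorem abs_pow_two_mul_le_of_abs_le {R : Type*} [CommRing R] [Lattice R] [IsOrderedRing R]
    (hf : ∀ x y z : R, 0 ≤ z → x ⊓ y = 0 → (x * z) ⊓ y = 0) {x y : R} (h : |x| ≤ |y|) (n : ℕ) :
    |x ^ (2 * n)| ≤ |y ^ (2 * n)| := by
  have h_even_pow (z : R) : z ^ (2 * n) = |z| ^ (2 * n) := by
    rw [pow_mul, ← sq_abs_eq_sq hf, ← pow_mul]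
  rw [h_even_pow x, h_even_pow y, abs_of_nonneg (pow_nonneg (abs_nonneg x) _),
    abs_of_nonneg (pow_nonneg (abs_nonneg y) _)]
  exact pow_le_pow_left₀ (abs_nonneg x) h _

theorem stmt_8_general {R : Type*} [CommRing R] [Lattice R]
    [CovariantClass R R (· + ·) (· ≤ ·)]
    (hmul : ∀ a b : R, 0 ≤ a → 0 ≤ b → 0 ≤ a * b)
    (hf : ∀ x y z : R, 0 ≤ z → x ⊓ y = 0 → (x * z) ⊓ y = 0)
    (I : Set R)
    (h0 : (0 : R) ∈ I)
    (hadd : ∀ x y : R, x ∈ I → y ∈ I → x + y ∈ I)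
    (hconv : ∀ x y : R, y ∈ I → (x ⊔ -x) ≤ (y ⊔ -y) → x ∈ I)
    (hmulI : ∀ x y : R, x ∈ I → x * y ∈ I) :
    (0 : R) ∈ {x : R | ∃ n : ℕ, 1 ≤ n ∧ x ^ n ∈ I} ∧
    (∀ x y : R, (∃ n : ℕ, 1 ≤ n ∧ x ^ n ∈ I) → (∃ n : ℕ, 1 ≤ n ∧ y ^ n ∈ I) →
        ∃ n : ℕ, 1 ≤ n ∧ (x + y) ^ n ∈ I) ∧
    (∀ x : R, (∃ n : ℕ, 1 ≤ n ∧ x ^ n ∈ I) → ∃ n : ℕ, 1 ≤ n ∧ (-x) ^ n ∈ I) ∧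
    (∀ x y : R, (∃ n : ℕ, 1 ≤ n ∧ y ^ n ∈ I) → (x ⊔ -x) ≤ (y ⊔ -y) →
        ∃ n : ℕ, 1 ≤ n ∧ x ^ n ∈ I) ∧
    (∀ x y : R, (∃ n : ℕ, 1 ≤ n ∧ x ^ n ∈ I) → ∃ n : ℕ, 1 ≤ n ∧ (x * y) ^ n ∈ I) := by
  have : IsOrderedAddMonoid R := { add_le_add_left := fun _ _ h c => add_le_add_left h c }
  have : ZeroLEOneClass R := zeroLEOneClass_of_mul_nonneg hmul hf
  have : IsOrderedRing R := .of_mul_nonneg hmul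
  let J : Ideal R :=
    { carrier := I
      zero_mem' := h0
      add_mem' := hadd _ _
      smul_mem' := fun c x hx => show c * x ∈ I from mul_comm x c ▸ hmulI x c hx }
  have hrad (x : R) : x ∈ J.radical ↔ ∃ n, 1 ≤ n ∧ x ^ n ∈ I :=
    Ideal.mem_radical_iff_exists_one_le_pow
  refine ⟨⟨1, le_rfl, by simpa using h0⟩, fun x y hx hy => ?_, fun x hx => ?_, ?_,
    fun x y hx => (hrad _).1 (J.radical.mul_mem_right y ((hrad x).2 hx))⟩
  · exact (hrad _).1 (J.radical.add_mem ((hrad x).2 hx) ((hrad y).2 hy))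
  · exact (hrad _).1 (J.radical.neg_mem ((hrad x).2 hx))
  · rintro x y ⟨n, hn, hy⟩ hxy
    exact ⟨2 * n, by omega, hconv _ _ (J.pow_mem_of_pow_mem hy (by omega))
      (abs_pow_two_mul_le_of_abs_le hf hxy n)⟩

/-- In a commutative f-ring, the nil-radical `√I = {x : xⁿ ∈ I for some n ≥ 1}`
of an ℓ-ideal `I` is again an ℓ-ideal. Here `|x| = x ⊔ -x`. -/
theorem stmt_8 {R : Type*} [CommRing R] [Lattice R]
    [CovariantClass R R (· + ·) (· ≤ ·)]
    (hmul : ∀ a b : R, 0 ≤ a → 0 ≤ b → 0 ≤ a * b)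
    (hf : ∀ x y z : R, 0 ≤ z → x ⊓ y = 0 → (x * z) ⊓ y = 0)
    (I : Set R)
    (h0 : (0 : R) ∈ I)
    (hadd : ∀ x y : R, x ∈ I → y ∈ I → x + y ∈ I)
    (hneg : ∀ x : R, x ∈ I → -x ∈ I)
    (hconv : ∀ x y : R, y ∈ I → (x ⊔ -x) ≤ (y ⊔ -y) → x ∈ I)
    (hmulI : ∀ x y : R, x ∈ I → x * y ∈ I) :
    (0 : R) ∈ {x : R | ∃ n : ℕ, 1 ≤ n ∧ x ^ n ∈ I} ∧
    (∀ x y : R, (∃ n : ℕ, 1 ≤ n ∧ x ^ n ∈ I) → (∃ n : ℕ, 1 ≤ n ∧ y ^ n ∈ I) →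
        ∃ n : ℕ, 1 ≤ n ∧ (x + y) ^ n ∈ I) ∧
    (∀ x : R, (∃ n : ℕ, 1 ≤ n ∧ x ^ n ∈ I) → ∃ n : ℕ, 1 ≤ n ∧ (-x) ^ n ∈ I) ∧
    (∀ x y : R, (∃ n : ℕ, 1 ≤ n ∧ y ^ n ∈ I) → (x ⊔ -x) ≤ (y ⊔ -y) →
        ∃ n : ℕ, 1 ≤ n ∧ x ^ n ∈ I) ∧
    (∀ x y : R, (∃ n : ℕ, 1 ≤ n ∧ x ^ n ∈ I) → ∃ n : ℕ, 1 ≤ n ∧ (x * y) ^ n ∈ I) :=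
  stmt_8_general hmul hf I h0 hadd hconv hmulI
end

section
/- Every continuous piecewise polynomial function f: ℝ → ℝ (with finitely many polynomial pieces) can be written as a finite supremum of finite infima of polynomials: f = ⋁ᵢ ⋀ⱼ qᵢⱼ for polynomials qᵢⱼ ∈ ℝ[x]. (Pierce-Birkhoff conjecture in dimension 1.) -/
/-!
Only finitely many points `Z` are crossings of two distinct pieces, and between consecutive
points of `Z` the function `f` is a single piece. Fix `c` and a stretch `[a, c]` on which `f = g`.
For odd `N` and large `K` the polynomial `L = g - K ((a - x) + (a - x) ^ N)` lies above `g` on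
`[a, ∞)` and below `f` on `(-∞, a)`: close to `a` because the piece of `f` there meets `g` at `a`,
far from `a` because `(a - x) ^ N` dominates every piece. Together with the mirror image `R` on
the right of `c`, `min (g, L, R)` is at most `f` everywhere and equals `f c` at `c`. These minima
come from a finite stock of polynomials, so `f` is the maximum of finitely many of them.
-/

open Polynomial Set

theorem pow_le_one_add_pow {R : Type*} [Semiring R] [LinearOrder R] [IsStrictOrderedRing R]
    {y : R} (hy : 0 ≤ y) {i N : ℕ} (hi : i ≤ N) : y ^ i ≤ 1 + y ^ N := by
  rcases le_total y 1 with h | h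
  · exact (pow_le_one₀ hy h).trans (le_add_of_nonneg_right (pow_nonneg hy N))
  · exact (pow_le_pow_right₀ h hi).trans (le_add_of_nonneg_left zero_le_one)

namespace Polynomial

theorem exists_abs_eval_le_one_add_pow (r : ℝ[X]) (t : ℝ) {N : ℕ} (hr : r.natDegree ≤ N) :
    ∃ C, 0 ≤ C ∧ ∀ x, |r.eval x| ≤ C * (1 + |x - t| ^ N) := by
  set r' := taylor t r
  have hr' : r'.natDegree < N + 1 := by rw [natDegree_taylor]; omega
  refine ⟨∑ i ∈ Finset.range (N + 1), |r'.coeff i|, by positivity, fun x => ?_⟩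
  have hx : r.eval x = r'.eval (x - t) := by simp [r', taylor_eval]
  rw [hx, eval_eq_sum_range' hr', Finset.sum_mul]
  refine (Finset.abs_sum_le_sum_abs _ _).trans (Finset.sum_le_sum fun i hi => ?_)
  rw [abs_mul, abs_pow]
  exact mul_le_mul_of_nonneg_left
    (pow_le_one_add_pow (abs_nonneg _) (Nat.lt_succ_iff.1 (Finset.mem_range.1 hi))) (abs_nonneg _)

theorem exists_abs_eval_sub_eval_le (r : ℝ[X]) (t : ℝ) {N : ℕ} (hr : r.natDegree ≤ N + 1) :
    ∃ C, 0 ≤ C ∧ ∀ x, |r.eval x - r.eval t| ≤ C * (|x - t| + |x - t| ^ (N + 1)) := by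
  set u := (r - C (r.eval t)) /ₘ (X - C t)
  have hu : (X - C t) * u = r - C (r.eval t) :=
    mul_divByMonic_eq_iff_isRoot.2 (by simp [IsRoot])
  have hdeg : u.natDegree ≤ N := by
    rw [natDegree_divByMonic _ (monic_X_sub_C t), natDegree_sub_C, natDegree_X_sub_C]; omega
  obtain ⟨K, hK0, hK⟩ := exists_abs_eval_le_one_add_pow u t hdeg
  refine ⟨K, hK0, fun x => ?_⟩
  have hx : r.eval x - r.eval t = (x - t) * u.eval x := by
    simpa using (congrArg (eval x) hu).symm
  calc |r.eval x - r.eval t| = |x - t| * |u.eval x| := by rw [hx, abs_mul]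
    _ ≤ |x - t| * (K * (1 + |x - t| ^ N)) := mul_le_mul_of_nonneg_left (hK x) (abs_nonneg _)
    _ = K * (|x - t| + |x - t| ^ (N + 1)) := by ring

end Polynomial

noncomputable def crossings (s : Finset ℝ[X]) : Finset ℝ :=
  s.offDiag.biUnion fun pq => (pq.1 - pq.2).roots.toFinset

theorem mem_crossings {s : Finset ℝ[X]} {x : ℝ} :
    x ∈ crossings s ↔ ∃ p ∈ s, ∃ q ∈ s, p ≠ q ∧ p.eval x = q.eval x := by
  simp [crossings, mem_roots', sub_eq_zero, and_assoc]

/-- The minimum of the polynomials in `A` is at most `f` on `S` and at least `f c` at `c`. -/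
def MinSupports (f : ℝ → ℝ) (S : Set ℝ) (c : ℝ) (A : Finset ℝ[X]) : Prop :=
  (∀ p ∈ A, f c ≤ p.eval c) ∧ ∀ x ∈ S, ∃ p ∈ A, p.eval x ≤ f x

theorem MinSupports.union {f : ℝ → ℝ} {S T : Set ℝ} {c : ℝ} {A B : Finset ℝ[X]}
    [DecidableEq ℝ[X]] (hA : MinSupports f S c A) (hB : MinSupports f T c B) :
    MinSupports f (S ∪ T) c (A ∪ B) := by
  refine ⟨fun p hp => ?_, fun x hx => ?_⟩
  · rcases Finset.mem_union.1 hp with h | h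
    exacts [hA.1 p h, hB.1 p h]
  · rcases hx with hx | hx
    · obtain ⟨p, hp, hpx⟩ := hA.2 x hx
      exact ⟨p, Finset.mem_union_left _ hp, hpx⟩
    · obtain ⟨p, hp, hpx⟩ := hB.2 x hx
      exact ⟨p, Finset.mem_union_right _ hp, hpx⟩

variable {f : ℝ → ℝ} {s : Finset ℝ[X]}

theorem exists_mem_eqOn_of_isPreconnected (hf : Continuous f)
    (hs : ∀ x, ∃ p ∈ s, f x = p.eval x) {U : Set ℝ} (hU : IsPreconnected U)
    (hU₀ : U.Nonempty) (hUs : ∀ x ∈ U, x ∉ crossings s) : ∃ p ∈ s, EqOn f (eval · p) U := by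
  obtain ⟨x₀, hx₀⟩ := hU₀
  obtain ⟨p, hp, hpx₀⟩ := hs x₀
  have hclosed : ∀ q : ℝ[X], IsClosed {x | f x = q.eval x} := fun q =>
    isClosed_eq hf q.continuous
  set V := ⋃ q ∈ s.erase p, {x | f x = q.eval x}
  have hcover : U ⊆ {x | f x = p.eval x} ∪ V := by
    intro x _
    obtain ⟨q, hq, hqx⟩ := hs x
    by_cases hqp : q = p
    · exact Or.inl (hqp ▸ hqx)
    · exact Or.inr (mem_biUnion (Finset.mem_erase.2 ⟨hqp, hq⟩) hqx)
  have hdisj : U ∩ ({x | f x = p.eval x} ∩ V) = ∅ := by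
    refine eq_empty_of_forall_notMem fun x ⟨hxU, hpx, hxV⟩ => ?_
    obtain ⟨q, hq, hqx⟩ := mem_iUnion₂.1 hxV
    obtain ⟨hqp, hq⟩ := Finset.mem_erase.1 hq
    exact hUs x hxU (mem_crossings.2 ⟨p, hp, q, hq, Ne.symm hqp, hpx.symm.trans hqx⟩)
  rcases isPreconnected_iff_subset_of_disjoint_closed.1 hU _ V (hclosed p)
    (isClosed_biUnion_finset fun q _ => hclosed q) hcover hdisj with h | h
  · exact ⟨p, hp, h⟩
  · exact (hdisj.subset ⟨hx₀, hpx₀, h hx₀⟩).elim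

theorem exists_eqOn_Iic_or_Icc (hf : Continuous f) (hs : ∀ x, ∃ p ∈ s, f x = p.eval x) (c : ℝ) :
    ∃ g ∈ s, EqOn f (eval · g) (Iic c) ∨
      ∃ a ∈ crossings s, a < c ∧ EqOn f (eval · g) (Icc a c) := by
  classical
  set below := (crossings s).filter (· < c)
  rcases below.eq_empty_or_nonempty with hempty | hne
  · obtain ⟨g, hg, hfg⟩ := exists_mem_eqOn_of_isPreconnected hf hs isPreconnected_Iio
      ⟨c - 1, by simp⟩ fun x hx hxs =>
        (Finset.notMem_empty x) (hempty ▸ Finset.mem_filter.2 ⟨hxs, hx⟩)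
    refine ⟨g, hg, Or.inl ?_⟩
    simpa only [closure_Iio] using hfg.closure hf g.continuous
  · set a := below.max' hne
    obtain ⟨ha, hac⟩ := Finset.mem_filter.1 (below.max'_mem hne)
    obtain ⟨g, hg, hfg⟩ := exists_mem_eqOn_of_isPreconnected hf hs isPreconnected_Ioo
      (nonempty_Ioo.2 hac) fun x hx hxs =>
        (below.le_max' x (Finset.mem_filter.2 ⟨hxs, hx.2⟩)).not_gt hx.1
    refine ⟨g, hg, Or.inr ⟨a, ha, hac, ?_⟩⟩
    simpa only [closure_Ioo hac.ne] using hfg.closure hf g.continuous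

theorem eventually_eval_eq_imp_eval_eq {t : ℝ} (hf : ContinuousAt f t) (s : Finset ℝ[X]) :
    ∀ᶠ x in nhds t, ∀ p ∈ s, f x = p.eval x → p.eval t = f t := by
  refine (Filter.eventually_all_finset s).2 fun p _ => ?_
  by_cases hpt : p.eval t = f t
  · exact Filter.Eventually.of_forall fun _ _ => hpt
  · filter_upwards [(hf.sub p.continuous.continuousAt).eventually_ne (sub_ne_zero.2 (Ne.symm hpt))]
      with x hx hfx
    exact absurd (sub_eq_zero.2 hfx) hx

theorem exists_poly_le_on_Iio_ge_on_Ici (hf : Continuous f) (hs : ∀ x, ∃ p ∈ s, f x = p.eval x)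
    (g : ℝ[X]) {t : ℝ} (hgt : g.eval t = f t) :
    ∃ L : ℝ[X], (∀ x, t ≤ x → g.eval x ≤ L.eval x) ∧ ∀ x < t, L.eval x ≤ f x := by
  obtain ⟨δ, hδ, hδs⟩ :=
    Metric.eventually_nhds_iff.1 (eventually_eval_eq_imp_eval_eq hf.continuousAt s)
  set N := 2 * s.sup (fun p => (g - p).natDegree) + 1
  have hbound : ∀ p ∈ s, ∃ K, 0 ≤ K ∧ ∀ x < t, f x = p.eval x →
      g.eval x - p.eval x ≤ K * ((t - x) + (t - x) ^ N) := by
    intro p hp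
    have hdeg : (g - p).natDegree ≤ N :=
      (Finset.le_sup (f := fun p => (g - p).natDegree) hp).trans (by omega)
    obtain ⟨K, hK0, hK⟩ := exists_abs_eval_sub_eval_le (g - p) t hdeg
    refine ⟨K + |(g - p).eval t| / δ, by positivity, fun x hxt hfx => ?_⟩
    have hdist : |x - t| = t - x := by rw [abs_sub_comm]; exact abs_of_pos (by linarith)
    have hpos : 0 ≤ (t - x) ^ N := pow_nonneg (by linarith) N
    have hvalue : (g - p).eval t ≤ |(g - p).eval t| / δ * ((t - x) + (t - x) ^ N) := by
      -- Near `t` the piece `p` passes through `f t = g t`; far from `t` the constant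
      -- `(g - p).eval t` is absorbed by the linear term.
      rcases lt_or_ge (t - x) δ with hnear | hfar
      · have hpt := hδs (by rwa [Real.dist_eq, hdist]) p hp hfx
        rw [eval_sub, hpt, hgt, sub_self]
        positivity
      · calc (g - p).eval t ≤ |(g - p).eval t| / δ * δ := by
              rw [div_mul_cancel₀ _ hδ.ne']; exact le_abs_self _
          _ ≤ _ := by gcongr; linarith
    have hK' := (abs_le.1 (hK x)).2
    rw [hdist] at hK'
    simp only [eval_sub] at hK' hvalue ⊢
    linarith
  choose! K hK0 hK using hbound
  refine ⟨g - C (∑ p ∈ s, K p) * ((C t - X) + (C t - X) ^ N), fun x hx => ?_, fun x hx => ?_⟩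
  · have hneg : (t - x) ^ N ≤ 0 := (odd_two_mul_add_one _).pow_nonpos (by linarith)
    have hsum : 0 ≤ ∑ p ∈ s, K p := Finset.sum_nonneg hK0
    simp only [eval_sub, eval_mul, eval_add, eval_pow, eval_C, eval_X]
    nlinarith
  · obtain ⟨p, hp, hfx⟩ := hs x
    have hKp : K p ≤ ∑ p ∈ s, K p := Finset.single_le_sum hK0 hp
    have hpos : 0 ≤ (t - x) + (t - x) ^ N := by
      have : 0 < t - x := by linarith
      positivity
    have := hK p hp x hx hfx
    simp only [eval_sub, eval_mul, eval_add, eval_pow, eval_C, eval_X]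
    nlinarith

theorem exists_finset_forall_minSupports_Iic (hf : Continuous f)
    (hs : ∀ x, ∃ p ∈ s, f x = p.eval x) :
    ∃ P : Finset ℝ[X], ∀ c, ∃ B ⊆ P, MinSupports f (Iic c) c B := by
  classical
  have hguard : ∀ (t : ℝ) (g : ℝ[X]), ∃ L : ℝ[X], g.eval t = f t →
      (∀ x, t ≤ x → g.eval x ≤ L.eval x) ∧ ∀ x < t, L.eval x ≤ f x := fun t g => by
    by_cases hgt : g.eval t = f t
    · obtain ⟨L, hL⟩ := exists_poly_le_on_Iio_ge_on_Ici hf hs g hgt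
      exact ⟨L, fun _ => hL⟩
    · exact ⟨0, fun h => absurd h hgt⟩
  choose L hL using hguard
  refine ⟨s ∪ (crossings s ×ˢ s).image (fun tg => L tg.1 tg.2), fun c => ?_⟩
  obtain ⟨g, hg, hfg | ⟨a, ha, hac, hfg⟩⟩ := exists_eqOn_Iic_or_Icc hf hs c
  · refine ⟨{g}, Finset.singleton_subset_iff.2 (Finset.mem_union_left _ hg),
      by simpa using (hfg (le_refl c)).le,
      fun x hx => ⟨g, Finset.mem_singleton_self g, (hfg hx).ge⟩⟩
  · have hfc : f c = g.eval c := hfg (right_mem_Icc.2 hac.le)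
    obtain ⟨hLg, hLf⟩ := hL a g (hfg (left_mem_Icc.2 hac.le)).symm
    refine ⟨{g, L a g}, ?_, ?_, fun x hx => ?_⟩
    · refine Finset.insert_subset (Finset.mem_union_left _ hg)
        (Finset.singleton_subset_iff.2 (Finset.mem_union_right _ ?_))
      exact Finset.mem_image.2 ⟨(a, g), Finset.mem_product.2 ⟨ha, hg⟩, rfl⟩
    · simp only [Finset.mem_insert, Finset.mem_singleton, forall_eq_or_imp, forall_eq]
      exact ⟨hfc.le, hfc.le.trans (hLg c hac.le)⟩
    · rcases lt_or_ge x a with hxa | hax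
      · exact ⟨L a g, by simp, hLf x hxa⟩
      · exact ⟨g, by simp, (hfg ⟨hax, hx⟩).ge⟩

theorem exists_finset_forall_minSupports_Ici (hf : Continuous f)
    (hs : ∀ x, ∃ p ∈ s, f x = p.eval x) :
    ∃ P : Finset ℝ[X], ∀ c, ∃ B ⊆ P, MinSupports f (Ici c) c B := by
  classical
  set σ : ℝ[X] → ℝ[X] := fun p => p.comp (-X)
  have hσ : ∀ p x, (σ p).eval x = p.eval (-x) := by simp [σ]
  obtain ⟨P, hP⟩ := exists_finset_forall_minSupports_Iic (f := fun x => f (-x)) (s := s.image σ)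
    (hf.comp continuous_neg) fun x => by
      obtain ⟨p, hp, hpx⟩ := hs (-x)
      exact ⟨σ p, Finset.mem_image_of_mem σ hp, by rw [hσ]; exact hpx⟩
  refine ⟨P.image σ, fun c => ?_⟩
  obtain ⟨B, hBP, hBc, hBx⟩ := hP (-c)
  refine ⟨B.image σ, Finset.image_subset_image hBP, by simpa [hσ] using hBc, fun x hx => ?_⟩
  obtain ⟨p, hp, hpx⟩ := hBx (-x) (mem_Iic.2 (neg_le_neg hx))
  exact ⟨σ p, Finset.mem_image_of_mem σ hp, by simpa [hσ] using hpx⟩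

theorem exists_fin_sup_inf_eq_of_minSupports (f : ℝ → ℝ) (P : Finset ℝ[X])
    (hP : ∀ c, ∃ A ⊆ P, MinSupports f univ c A) :
    ∃ (m k : ℕ) (q : Fin (m + 1) → Fin (k + 1) → ℝ[X]),
      ∀ x, f x = Finset.univ.sup' Finset.univ_nonempty fun i =>
        Finset.univ.inf' Finset.univ_nonempty fun j => (q i j).eval x := by
  classical
  set Q := P.powerset.filter fun A => ∀ x, ∃ p ∈ A, p.eval x ≤ f x
  have hQ : ∀ c, ∃ A ∈ Q, ∀ p ∈ A, f c ≤ p.eval c := fun c => by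
    obtain ⟨A, hAP, hup, hlow⟩ := hP c
    exact ⟨A, Finset.mem_filter.2 ⟨Finset.mem_powerset.2 hAP, fun x => hlow x trivial⟩, hup⟩
  have hQP : ∀ A ∈ Q, A ⊆ P := fun A hA => Finset.mem_powerset.1 (Finset.mem_filter.1 hA).1
  have hQlow : ∀ A ∈ Q, ∀ x, ∃ p ∈ A, p.eval x ≤ f x := fun A hA => (Finset.mem_filter.1 hA).2
  choose! w hw using fun A hA => (hQlow A hA 0).imp fun p hp => hp.1
  obtain ⟨A₀, hA₀, -⟩ := hQ 0
  obtain ⟨m, hm⟩ := Nat.exists_eq_add_one.2 (Finset.card_pos.2 ⟨A₀, hA₀⟩)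
  obtain ⟨k, hk⟩ := Nat.exists_eq_add_one.2 (Finset.card_pos.2 ⟨w A₀, hQP A₀ hA₀ (hw A₀ hA₀)⟩)
  set eQ := Q.equivFinOfCardEq hm
  set eP := P.equivFinOfCardEq hk
  -- Row `i` lists the polynomials of `eQ.symm i`, padded with repetitions of one of them.
  set q : Fin (m + 1) → Fin (k + 1) → ℝ[X] := fun i j =>
    if ((eP.symm j : ℝ[X]) ∈ (eQ.symm i : Finset ℝ[X])) then eP.symm j else w (eQ.symm i)
  have hq_mem : ∀ i j, q i j ∈ (eQ.symm i : Finset ℝ[X]) := fun i j => by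
    simp only [q]; split_ifs with h
    exacts [h, hw _ (eQ.symm i).2]
  have hq_eq : ∀ i, ∀ p ∈ (eQ.symm i : Finset ℝ[X]), ∀ hpP : p ∈ P, q i (eP ⟨p, hpP⟩) = p :=
    fun i p hp hpP => by simp [q, hp]
  refine ⟨m, k, q, fun x => le_antisymm ?_ ?_⟩
  · obtain ⟨A, hA, hup⟩ := hQ x
    refine Finset.le_sup'_of_le _ (Finset.mem_univ (eQ ⟨A, hA⟩))
      (Finset.le_inf' _ _ fun j _ => hup _ ?_)
    simpa using hq_mem (eQ ⟨A, hA⟩) j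
  · refine Finset.sup'_le _ _ fun i _ => ?_
    obtain ⟨p, hp, hpx⟩ := hQlow _ (eQ.symm i).2 x
    have hpP : p ∈ P := hQP _ (eQ.symm i).2 hp
    refine (Finset.inf'_le _ (Finset.mem_univ (eP ⟨p, hpP⟩))).trans ?_
    rwa [hq_eq i p hp hpP]

/-- Pierce–Birkhoff conjecture in dimension 1: every continuous piecewise
polynomial function `ℝ → ℝ` is a finite sup of finite infs of polynomials. -/
theorem stmt_15 (f : ℝ → ℝ) (hcont : Continuous f)
    (s : Finset (Polynomial ℝ)) (hs : ∀ a : ℝ, ∃ p ∈ s, f a = p.eval a) :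
    ∃ (m k : ℕ) (q : Fin (m + 1) → Fin (k + 1) → Polynomial ℝ),
      ∀ x : ℝ, f x = Finset.univ.sup' Finset.univ_nonempty fun i =>
        Finset.univ.inf' Finset.univ_nonempty fun j => (q i j).eval x := by
  obtain ⟨Pl, hPl⟩ := exists_finset_forall_minSupports_Iic hcont hs
  obtain ⟨Pr, hPr⟩ := exists_finset_forall_minSupports_Ici hcont hs
  refine exists_fin_sup_inf_eq_of_minSupports f (Pl ∪ Pr) fun c => ?_
  obtain ⟨Bl, hBl, hl⟩ := hPl c
  obtain ⟨Br, hBr, hr⟩ := hPr c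
  exact ⟨Bl ∪ Br, Finset.union_subset_union hBl hBr, Iic_union_Ici (a := c) ▸ hl.union hr⟩
end
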